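/- arXiv:1306.3056 — 2 statements merged into one kernel-verified Lean document; each statement's English description precedes it below -/
import Mathlib

section
/- The subsequence (scattered subword) relation on words over a finite alphabet is a well-quasi-order: it is reflexive, transitive, and every infinite sequence of words contains an increasing pair. -/
theorem List.sublistForall₂_eq_eq_sublist {α : Type*} :
    List.SublistForall₂ (α := α) (· = ·) = List.Sublist := by
  ext l₁ l₂
  simp only [List.sublistForall₂_iff, List.forall₂_eq_eq_eq, exists_eq_left']

-- Higman's lemma for `SublistForall₂ r`, with `r` the equality of a finite alphabet.
theorem List.wellQuasiOrdered_sublist (α : Type*) [Finite α] :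
    WellQuasiOrdered (List.Sublist : List α → List α → Prop) := by
  have higman := (Set.finite_univ (α := α)).partiallyWellOrderedOn
    |>.partiallyWellOrderedOn_sublistForall₂ (· = ·)
  simpa only [Set.mem_univ, implies_true, Set.ofPred_true, Set.partiallyWellOrderedOn_univ_iff,
    List.sublistForall₂_eq_eq_sublist] using higman

/-- The subsequence (scattered subword) relation on words over a finite alphabet is a
well-quasi-order: it is reflexive, transitive, and every infinite sequence of words
contains an increasing pair. -/
theorem subsequence_wqo (A : Type) [Fintype A] :
    (∀ u : List A, u.Sublist u) ∧
    (∀ u v w : List A, u.Sublist v → v.Sublist w → u.Sublist w) ∧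
    (∀ f : ℕ → List A, ∃ i j : ℕ, i < j ∧ (f i).Sublist (f j)) :=
  ⟨List.Sublist.refl, fun _ _ _ => List.Sublist.trans, List.wellQuasiOrdered_sublist A⟩
end

section
/- Let τ be a finite relational signature with maximal arity m, let n and k be natural numbers. Then there exists a number R such that for every τ-structure S with domain A of size at least R, every k-tuple d over A, and every linear order ≺ on A, there is a subset B of A of size n, disjoint from the entries of d, such that for every l ≤ m, all ≺-increasing l-tuples a over B satisfy: the atomic type of (a, d) in S is the same. -/
/-- Two `l`-tuples over a relational structure (given by the interpretation `interp`
of the relation symbols `R` with arities `ar`) have the same atomic type: they satisfy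
the same equalities and the same relational atoms. -/
def SameType {X R : Type} (ar : R → ℕ) (interp : ∀ r, (Fin (ar r) → X) → Prop)
    {l : ℕ} (v w : Fin l → X) : Prop :=
  (∀ i j, v i = v j ↔ w i = w j) ∧
  ∀ (r : R) (ι : Fin (ar r) → Fin l), (interp r (v ∘ ι) ↔ interp r (w ∘ ι))

/-- A tuple is increasing with respect to a strict order `prec`. -/
def IncreasingWrt {X : Type} (prec : X → X → Prop) {l : ℕ} (a : Fin l → X) : Prop :=
  ∀ i j : Fin l, i < j → prec (a i) (a j)

/-!
Colour each `≺`-increasing `m`-tuple `e` of elements outside `d` by the atomic type of `(e, d)`;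
there are finitely many colours, so the finite Ramsey theorem for increasing tuples gives a set
`H` of size `n + m` on which all increasing `m`-tuples have the same colour. Let `B` consist of the
`n` smallest elements of `H`. An increasing `l`-tuple `a` over `B` with `l ≤ m` extends, by
`m - l` elements of `H` above `B`, to an increasing `m`-tuple `a'` over `H`, and the atomic type
of `(a, d)` is read off from that of `(a', d)`.

The Ramsey theorem itself is proved by induction on `m` along Erdős–Rado: build a sequence
`a₀ < a₁ < ⋯` in which the colour of `(aᵢ, s)` depends only on `i` for increasing `s` taken from
later terms, then pigeonhole on those colours.
-/

open Finset

section Ramsey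

variable {κ X : Type} [LinearOrder X] {m : ℕ}

def IsMonochromatic (C : (Fin m → X) → κ) (B : Set X) : Prop :=
  ∃ c, ∀ s : Fin m → X, StrictMono s → (∀ i, s i ∈ B) → C s = c

lemma IsMonochromatic.mono {C : (Fin m → X) → κ} {B B' : Set X} (h : IsMonochromatic C B)
    (hB' : B' ⊆ B) : IsMonochromatic C B' :=
  let ⟨c, hc⟩ := h
  ⟨c, fun s hs hsB' => hc s hs fun i => hB' (hsB' i)⟩

variable (κ) in
def IsRamseyBound (m n N : ℕ) : Prop :=
  ∀ {X : Type} [LinearOrder X] (C : (Fin m → X) → κ) (A : Finset X), N ≤ A.card →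
    ∃ B ⊆ A, B.card = n ∧ IsMonochromatic C (B : Set X)

lemma isRamseyBound_zero (n : ℕ) : IsRamseyBound κ 0 n n := by
  intro X _ C A hA
  obtain ⟨B, hBA, hB⟩ := exists_subset_card_eq hA
  exact ⟨B, hBA, hB, C Fin.elim0, fun s _ _ => congrArg C (Subsingleton.elim _ _)⟩

lemma exists_strictMono_isMonochromatic_cons (hm : ∀ n, ∃ N, IsRamseyBound κ m n N) (t : ℕ) :
    ∃ N, ∀ {X : Type} [LinearOrder X] (C : (Fin (m + 1) → X) → κ) (A : Finset X),
      N ≤ A.card → ∃ a : Fin t → X, StrictMono a ∧ (∀ i, a i ∈ A) ∧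
        ∀ i, IsMonochromatic (fun s => C (Fin.cons (a i) s)) (a '' Set.Ioi i) := by
  induction t with
  | zero =>
    exact ⟨0, fun _ _ _ => ⟨Fin.elim0, fun i => i.elim0, fun i => i.elim0, fun i => i.elim0⟩⟩
  | succ t ih =>
    obtain ⟨Nt, hNt⟩ := ih
    obtain ⟨N, hN⟩ := hm Nt
    refine ⟨N + 1, fun C A hA => ?_⟩
    have hA₀ : A.Nonempty := card_pos.mp (by omega)
    set a₀ := A.min' hA₀
    have ha₀A : a₀ ∈ A := A.min'_mem hA₀
    obtain ⟨B, hBA, hB, hBmono⟩ :=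
      hN (fun s => C (Fin.cons a₀ s)) (A.erase a₀) (by rw [card_erase_of_mem ha₀A]; omega)
    obtain ⟨a, ha, haB, hmono⟩ := hNt C B hB.ge
    have ha₀ (j : Fin t) : a₀ < a j :=
      (A.min'_le _ (mem_of_mem_erase (hBA (haB j)))).lt_of_ne
        (ne_of_mem_erase (hBA (haB j))).symm
    refine ⟨Fin.cons a₀ a, Fin.strictMono_cons.2 ⟨ha₀, ha⟩,
      Fin.cases ha₀A fun i => mem_of_mem_erase (hBA (haB i)), Fin.cases ?_ fun i => ?_⟩
    · refine hBmono.mono ?_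
      rintro _ ⟨j, hj, rfl⟩
      cases j using Fin.cases with
      | zero => exact absurd hj (lt_irrefl 0)
      | succ j => exact haB j
    · refine (hmono i).mono ?_
      rintro _ ⟨j, hj, rfl⟩
      cases j using Fin.cases with
      | zero => exact absurd hj (Fin.succ_pos i).not_gt
      | succ j => exact ⟨j, Fin.succ_lt_succ_iff.mp hj, rfl⟩

theorem exists_isRamseyBound [Finite κ] (m n : ℕ) : ∃ N, IsRamseyBound κ m n N := by
  induction m generalizing n with
  | zero => exact ⟨n, isRamseyBound_zero n⟩
  | succ m ih =>
    classical
    have := Fintype.ofFinite κ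
    obtain ⟨N, hN⟩ := exists_strictMono_isMonochromatic_cons ih (Fintype.card κ * n + 1)
    refine ⟨N, fun C A hA => ?_⟩
    obtain ⟨a, ha, haA, hmono⟩ := hN C A hA
    choose g hg using hmono
    obtain ⟨c, hc⟩ := Fintype.exists_lt_card_fiber_of_mul_lt_card g (n := n) (by simp)
    obtain ⟨I, hI, hIcard⟩ := exists_subset_card_eq hc.le
    refine ⟨I.image a, image_subset_iff.2 fun i _ => haA i,
      by rw [card_image_of_injective _ ha.injective, hIcard], c, fun s hs hsI => ?_⟩
    obtain ⟨i₀, hi₀, hs₀⟩ := mem_image.1 (hsI 0)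
    have hg₀ : g i₀ = c := (mem_filter.1 (hI hi₀)).2
    rw [← Fin.cons_self_tail s, ← hs₀, ← hg₀]
    refine hg i₀ (Fin.tail s) (hs.comp Fin.strictMono_succ) fun j => ?_
    obtain ⟨i, -, hi⟩ := mem_image.1 (hsI j.succ)
    refine ⟨i, ?_, hi⟩
    rw [Set.mem_Ioi, ← ha.lt_iff_lt, hi, hs₀]
    exact hs (Fin.succ_pos j)

end Ramsey

section AtomicType

variable {X R : Type} (ar : R → ℕ) (interp : ∀ r, (Fin (ar r) → X) → Prop)

def atomicType {l : ℕ} (v : Fin l → X) :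
    (Fin l → Fin l → Prop) × (∀ r, (Fin (ar r) → Fin l) → Prop) :=
  (fun i j => v i = v j, fun r ι => interp r (v ∘ ι))

variable {ar interp} {l : ℕ} {v w : Fin l → X}

lemma sameType_of_atomicType_eq (h : atomicType ar interp v = atomicType ar interp w) :
    SameType ar interp v w :=
  ⟨fun i j => (congrFun (congrFun (congrArg Prod.fst h) i) j).to_iff,
    fun r ι => (congrFun (congrFun (congrArg Prod.snd h) r) ι).to_iff⟩

lemma SameType.comp (h : SameType ar interp v w) {l' : ℕ} (ρ : Fin l' → Fin l) :
    SameType ar interp (v ∘ ρ) (w ∘ ρ) :=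
  ⟨fun i j => h.1 (ρ i) (ρ j), fun r ι => h.2 r (ρ ∘ ι)⟩

end AtomicType

lemma Fin.append_comp_castLE {X : Type} {l m k : ℕ} (hl : l ≤ m) (a : Fin m → X)
    (d : Fin k → X) :
    Fin.append (a ∘ Fin.castLE hl) d =
      Fin.append a d ∘ Fin.addCases (Fin.castAdd k ∘ Fin.castLE hl) (Fin.natAdd m) := by
  funext i
  refine Fin.addCases (fun i => ?_) (fun i => ?_) i <;> simp

lemma exists_strictMono_extension {X : Type} [LinearOrder X] {n m l : ℕ} (hl : l ≤ m)
    {e : Fin (n + m) → X} (he : StrictMono e) {a : Fin l → X} (ha : StrictMono a)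
    (hae : ∀ i, a i ∈ Set.range (e ∘ Fin.castAdd m)) :
    ∃ a' : Fin m → X, StrictMono a' ∧ (∀ i, a' i ∈ Set.range e) ∧ a' ∘ Fin.castLE hl = a := by
  have hlt (i : Fin l) (j : Fin (n + m)) (hj : n ≤ j) : a i < e j := by
    obtain ⟨j', hj'⟩ := hae i
    rw [← hj']
    exact he (by simp [Fin.lt_def]; omega)
  refine ⟨fun i => if h : (i : ℕ) < l then a ⟨i, h⟩ else e ⟨n + (i - l), by omega⟩,
    fun i j hij => ?_, fun i => ?_, funext fun i => by simp⟩
  · rw [Fin.lt_def] at hij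
    dsimp only
    split_ifs with hi hj hj
    · exact ha (Fin.mk_lt_mk.2 hij)
    · exact hlt _ _ (Nat.le_add_right n _)
    · omega
    · exact he (Fin.mk_lt_mk.2 (by omega))
  · dsimp only
    split_ifs
    · exact Set.range_comp_subset_range _ _ (hae _)
    · exact Set.mem_range_self _

theorem ramsey_structures_general (R : Type) [Fintype R] (ar : R → ℕ) (m : ℕ)
    (n k : ℕ) :
    ∃ N : ℕ, ∀ (X : Type) [Fintype X] (interp : ∀ r, (Fin (ar r) → X) → Prop),
      N ≤ Fintype.card X → ∀ (d : Fin k → X)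
      (prec : X → X → Prop), IsStrictTotalOrder X prec →
      ∃ B : Finset X, B.card = n ∧ (∀ i, d i ∉ B) ∧
        ∀ l, l ≤ m → ∀ a b : Fin l → X,
          (∀ i, a i ∈ B) → (∀ i, b i ∈ B) →
          IncreasingWrt prec a → IncreasingWrt prec b →
          SameType ar interp (Fin.append a d) (Fin.append b d) := by
  classical
  obtain ⟨N, hN⟩ := exists_isRamseyBound (n := n + m)
    (κ := (Fin (m + k) → Fin (m + k) → Prop) × (∀ r, (Fin (ar r) → Fin (m + k)) → Prop)) m
  refine ⟨N + k, fun X _ interp hX d prec _ => ?_⟩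
  let := linearOrderOfSTO prec
  have hA : N ≤ (univ.image d)ᶜ.card := by
    have := (card_image_le (s := univ) (f := d)).trans_eq (card_fin k)
    rw [card_compl]
    omega
  obtain ⟨H, hHA, hH, c, hc⟩ := hN (fun e => atomicType ar interp (Fin.append e d)) _ hA
  set e := H.orderEmbOfFin hH
  have extend (l) (hl : l ≤ m) (a : Fin l → X)
      (ha : ∀ i, a i ∈ univ.image (e ∘ Fin.castAdd m)) (hinc : IncreasingWrt prec a) :
      ∃ a' : Fin m → X, a' ∘ Fin.castLE hl = a ∧ atomicType ar interp (Fin.append a' d) = c := by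
    obtain ⟨a', ha', ha'H, rfl⟩ :=
      exists_strictMono_extension hl e.strictMono (fun i j h => hinc i j h) (by simpa using ha)
    refine ⟨a', rfl, hc a' ha' fun i => ?_⟩
    rw [← H.range_orderEmbOfFin hH]
    exact ha'H i
  refine ⟨univ.image (e ∘ Fin.castAdd m), ?_, fun i hi => ?_,
    fun l hl a b ha hb hainc hbinc => ?_⟩
  · rw [card_image_of_injective _ (e.injective.comp (Fin.castAdd_injective n m)), card_fin]
  · obtain ⟨j, -, hj⟩ := mem_image.1 hi
    have hdH : d i ∈ H := hj ▸ H.orderEmbOfFin_mem hH (Fin.castAdd m j)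
    simpa using hHA hdH
  · obtain ⟨a', rfl, ha'⟩ := extend l hl a ha hainc
    obtain ⟨b', rfl, hb'⟩ := extend l hl b hb hbinc
    rw [Fin.append_comp_castLE, Fin.append_comp_castLE]
    exact (sameType_of_atomicType_eq (ha'.trans hb'.symm)).comp _

/-- **Ramsey's theorem for relational structures with parameters.** For a finite
relational signature of maximal arity `m` and naturals `n`, `k` there is `N` such that
for every structure with domain of size at least `N`, every `k`-tuple `d` of parameters
and every linear (strict total) order `≺`, there is a set `B` of size `n` disjoint from
`d` such that for every `l ≤ m` all `≺`-increasing `l`-tuples `a` over `B` give tuples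
`(a, d)` of the same atomic type. -/
theorem ramsey_structures (R : Type) [Fintype R] (ar : R → ℕ) (m : ℕ)
    (har : ∀ r, ar r ≤ m) (n k : ℕ) :
    ∃ N : ℕ, ∀ (X : Type) [Fintype X] (interp : ∀ r, (Fin (ar r) → X) → Prop),
      N ≤ Fintype.card X → ∀ (d : Fin k → X)
      (prec : X → X → Prop), IsStrictTotalOrder X prec →
      ∃ B : Finset X, B.card = n ∧ (∀ i, d i ∉ B) ∧
        ∀ l, l ≤ m → ∀ a b : Fin l → X,
          (∀ i, a i ∈ B) → (∀ i, b i ∈ B) →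
          IncreasingWrt prec a → IncreasingWrt prec b →
          SameType ar interp (Fin.append a d) (Fin.append b d) :=
  ramsey_structures_general R ar m n k
end
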